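/- arXiv:1806.11563 — 3 statements merged into one kernel-verified Lean document; each statement's English description precedes it below -/
import Mathlib

section
/- Let G be a finite group and let H ≤ G be a perfect subgroup. Then the connecting homomorphism of the long exact cohomology sequence associated to the short exact sequence of G-modules 0 → ℤ → ℤ[G/H] → J_{G/H} → 0 gives an injective group homomorphism H²(G, J_{G/H}) ↪ H³(G, ℤ). -/
/-- The permutation representation on `H →₀ k` induced by a `G`-action on `H` (the meaning of
`Representation.ofMulAction` in the older Mathlib). -/
noncomputable def ofMulActionFinsupp (k : Type*) [CommSemiring k] (G : Type*) [Monoid G]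
    (H : Type*) [MulAction G H] : Representation k G (H →₀ k) where
  toFun g := Finsupp.lmapDomain k k (g • ·)
  map_one' := by ext x y; simp
  map_mul' x y := by ext z w; simp [mul_smul]

section ChevalleyInfra

open Finsupp

variable (G : Type) [Group G] [Finite G] (H : Subgroup G)

noncomputable def normElt : (G ⧸ H) →₀ ℤ :=
  Finsupp.equivFunOnFinite.symm (Function.const _ 1)

noncomputable def normSub : Submodule ℤ ((G ⧸ H) →₀ ℤ) :=
  Submodule.span ℤ {normElt G H}

private lemma ofMulAction_normElt (g : G) :
    ofMulActionFinsupp ℤ G (G ⧸ H) g (normElt G H) = normElt G H := by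
  classical
  rw [show ofMulActionFinsupp ℤ G (G ⧸ H) g = Finsupp.lmapDomain ℤ ℤ (g • ·) from rfl,
    Finsupp.lmapDomain_apply]
  ext a
  rw [show ((g • ·) : G ⧸ H → G ⧸ H) = ⇑(MulAction.toPerm g) from rfl,
    Finsupp.mapDomain_equiv_apply]
  rfl

private lemma normSub_le_comap (g : G) :
    normSub G H ≤ (normSub G H).comap (ofMulActionFinsupp ℤ G (G ⧸ H) g) := by
  rw [normSub, Submodule.span_le]
  rintro x hx
  simp only [Set.mem_singleton_iff] at hx
  subst hx
  simp only [SetLike.mem_coe, Submodule.mem_comap, ofMulAction_normElt]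
  exact Submodule.mem_span_singleton_self _

noncomputable def chevalleyRep :
    Representation ℤ G (((G ⧸ H) →₀ ℤ) ⧸ normSub G H) where
  toFun g := Submodule.mapQ _ _ (ofMulActionFinsupp ℤ G (G ⧸ H) g)
    (normSub_le_comap G H g)
  map_one' := by
    apply Submodule.linearMap_qext
    ext x
    simp [Submodule.mapQ_apply]
  map_mul' g₁ g₂ := by
    apply Submodule.linearMap_qext
    ext x
    simp [Submodule.mapQ_apply, Module.End.mul_apply]

noncomputable def chevalley : Rep ℤ G := Rep.of (chevalleyRep G H)

end ChevalleyInfra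

open CategoryTheory groupCohomology

section CochainsFunctoriality

variable {k : Type} [CommRing k] {G : Type} [Group G]

/-- The map of complexes of inhomogeneous cochains induced by a morphism of
representations, given by postcomposition. -/
noncomputable def cochainsPostMap {A B : Rep k G} (φ : A ⟶ B) :
    inhomogeneousCochains A ⟶ inhomogeneousCochains B where
  f m := ModuleCat.ofHom
    { toFun := fun ψ (x : Fin m → G) => φ.hom (ψ x)
      map_add' := fun ψ ψ' => by funext x; exact map_add φ.hom _ _
      map_smul' := fun c ψ => by funext x; exact map_smul φ.hom c _ }
  comm' i j hij := by
    obtain rfl : j = i + 1 := hij.symm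
    ext ψ g
    show (inhomogeneousCochains B).d i (i + 1) (fun x => φ.hom (ψ x)) g
      = φ.hom ((inhomogeneousCochains A).d i (i + 1) ψ g)
    rw [inhomogeneousCochains.d_def, inhomogeneousCochains.d_def]
    erw [inhomogeneousCochains.d_hom_apply, inhomogeneousCochains.d_hom_apply]
    rw [map_add φ.hom, map_sum φ.hom]
    congr 1
    · exact (Rep.hom_comm_apply φ (g 0) _).symm
    · exact Finset.sum_congr rfl fun x _ => by rw [map_smul φ.hom]

end CochainsFunctoriality

section SES

variable (G : Type) [Group G] [Finite G] (H : Subgroup G)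

noncomputable def etaRepHom :
    Rep.trivial ℤ G ℤ ⟶ Rep.of (ofMulActionFinsupp ℤ G (G ⧸ H)) :=
  Rep.ofHom
  { toLinearMap := LinearMap.toSpanSingleton ℤ _ (normElt G H)
    isIntertwining' g := by
      refine LinearMap.ext fun c => ?_
      change LinearMap.toSpanSingleton ℤ _ (normElt G H) c
        = ofMulActionFinsupp ℤ G (G ⧸ H) g (LinearMap.toSpanSingleton ℤ _ (normElt G H) c)
      rw [LinearMap.toSpanSingleton_apply, map_smul, ofMulAction_normElt] }

noncomputable def quotRepHom :
    Rep.of (ofMulActionFinsupp ℤ G (G ⧸ H)) ⟶ chevalley G H :=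
  Rep.ofHom
  { toLinearMap := (normSub G H).mkQ
    isIntertwining' g := by
      refine LinearMap.ext fun (x : (G ⧸ H) →₀ ℤ) => ?_
      change (normSub G H).mkQ (ofMulActionFinsupp ℤ G (G ⧸ H) g x)
        = chevalleyRep G H g ((normSub G H).mkQ x)
      rw [Submodule.mkQ_apply, Submodule.mkQ_apply]
      show Submodule.Quotient.mk (ofMulActionFinsupp ℤ G (G ⧸ H) g x)
        = Submodule.mapQ _ _ (ofMulActionFinsupp ℤ G (G ⧸ H) g)
            (normSub_le_comap G H g) (Submodule.Quotient.mk x)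
      rw [Submodule.mapQ_apply] }

noncomputable def sesCochainComplexes :
    ShortComplex (HomologicalComplex (ModuleCat ℤ) (ComplexShape.up ℕ)) :=
  ShortComplex.mk (cochainsPostMap (etaRepHom G H)) (cochainsPostMap (quotRepHom G H)) (by
    ext m ψ x
    show (normSub G H).mkQ (LinearMap.toSpanSingleton ℤ _ (normElt G H) (ψ x)) = 0
    rw [Submodule.mkQ_apply, Submodule.Quotient.mk_eq_zero, normSub,
      LinearMap.span_singleton_eq_range]
    exact LinearMap.mem_range_self _ _)

lemma normElt_ne_zero : normElt G H ≠ 0 := by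
  intro h
  have h1 : (normElt G H) ((1 : G) : G ⧸ H) = 1 := rfl
  rw [h] at h1
  simp at h1

lemma sesCochainComplexes_shortExact : (sesCochainComplexes G H).ShortExact := by
  apply HomologicalComplex.shortExact_of_degreewise_shortExact
  intro i
  refine ShortComplex.ShortExact.mk' ?_ ?_ ?_
  · rw [ShortComplex.moduleCat_exact_iff]
    intro ψ hψ
    have mem : ∀ x : Fin i → G, (ψ : (Fin i → G) → ((G ⧸ H) →₀ ℤ)) x ∈ normSub G H := by
      intro x
      rw [← Submodule.Quotient.mk_eq_zero]
      exact congrFun hψ x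
    choose c hc using fun x => Submodule.mem_span_singleton.1 (mem x)
    exact ⟨c, funext fun x => hc x⟩
  · rw [ModuleCat.mono_iff_injective]
    intro ψ ψ' h
    funext x
    exact smul_left_injective ℤ (normElt_ne_zero G H) (congrFun h x)
  · rw [ModuleCat.epi_iff_surjective]
    intro Ψ
    choose ψ hψ using fun x : Fin i → G =>
      Submodule.Quotient.mk_surjective (normSub G H)
        ((Ψ : (Fin i → G) → (((G ⧸ H) →₀ ℤ) ⧸ normSub G H)) x)
    exact ⟨ψ, funext fun x => hψ x⟩

end SES

/-! The connecting map is injective because the preceding term `H²(G, ℤ[G/H])` of the long exact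
sequence vanishes. By Shapiro's lemma `H²(G, ℤ[G/H]) ≅ H²(H, ℤ)`, and the sequence
`0 → ℤ → ℚ → ℚ/ℤ → 0` places `H²(H, ℤ)` between `H¹(H, ℚ/ℤ) = Hom(H, ℚ/ℤ)`, which is zero because
`H` is perfect, and `H²(H, ℚ)`, which is zero because `|H|` is invertible in `ℚ`. -/

open Limits

namespace groupCohomology

variable {k G : Type} [CommRing k] [Group G]

theorem isZero_H2_of_bijective_nsmul_card [Fintype G] (A : Rep k G)
    (hA : Function.Bijective fun a : A => Fintype.card G • a) :
    IsZero (groupCohomology A 2) := by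
  refine ModuleCat.isZero_iff_subsingleton.2 ⟨fun x y => ?_⟩
  suffices ∀ c : groupCohomology A 2, c = 0 by rw [this x, this y]
  intro c
  induction c using H2_induction_on with | h f => ?_
  rw [H2π_eq_zero_iff]
  set n := Fintype.card G
  set S : G → A := fun g => ∑ x, f (g, x)
  have hS : ∀ g h, A.ρ g (S h) - S (g * h) + S g = n • f (g, h) := by
    intro g h
    have hf := (mem_cocycles₂_def (f : G × G → A)).1 f.2 g h
    have hsum := Finset.sum_eq_zero (s := Finset.univ) fun j _ => hf j
    simp only [Finset.sum_sub_distrib, Finset.sum_add_distrib, Finset.sum_const,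
      Finset.card_univ, ← map_sum] at hsum
    rw [Fintype.sum_equiv (Equiv.mulLeft h) (fun j => f (g, h * j)) (fun j => f (g, j))
      fun _ => rfl] at hsum
    exact sub_eq_zero.1 hsum
  obtain ⟨b, hb⟩ : ∃ b : G → A, ∀ g, n • b g = S g :=
    ⟨fun g => (hA.2 (S g)).choose, fun g => (hA.2 (S g)).choose_spec⟩
  refine ⟨b, funext fun ⟨g, h⟩ => hA.1 ?_⟩
  simp only [d₁₂_hom_apply, smul_add, smul_sub, ← map_nsmul, hb]
  exact hS g h

theorem isZero_H1_of_isTrivial_of_commutator_eq_top (A : Rep k G) [A.IsTrivial]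
    (hG : commutator G = ⊤) : IsZero (groupCohomology A 1) := by
  refine IsZero.of_iso ?_ (H1IsoOfIsTrivial A)
  refine ModuleCat.isZero_iff_subsingleton.2 ⟨fun φ ψ => ?_⟩
  have hzero : ∀ χ : Additive G →+ A, χ = 0 := fun χ => by
    ext g
    have := Abelianization.commutator_subset_ker (AddMonoidHom.toMultiplicativeRight χ)
      (hG ▸ Subgroup.mem_top g)
    exact congrArg Multiplicative.toAdd this
  rw [hzero φ, hzero ψ]

end groupCohomology

instance {k G : Type} [CommRing k] [Group G] : (Rep.trivialFunctor k G).Additive where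

theorem CategoryTheory.ShortComplex.ShortExact.map_trivialFunctor {k G : Type} [CommRing k]
    [Group G] {S : ShortComplex (ModuleCat k)} (hS : S.ShortExact) :
    (S.map (Rep.trivialFunctor k G)).ShortExact where
  exact := by
    rw [← ShortComplex.exact_map_iff_of_faithful _ (forget₂ (Rep k G) (ModuleCat k))]
    exact hS.exact
  mono_f := (Rep.mono_iff_injective _).2 ((ModuleCat.mono_iff_injective _).1 hS.mono_f)
  epi_g := (Rep.epi_iff_surjective _).2 ((ModuleCat.epi_iff_surjective _).1 hS.epi_g)

noncomputable def ModuleCat.intRatShortComplex : ShortComplex (ModuleCat ℤ) :=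
  ShortComplex.mk (ModuleCat.ofHom (Algebra.linearMap ℤ ℚ))
    (ModuleCat.ofHom (LinearMap.range (Algebra.linearMap ℤ ℚ)).mkQ) (by ext; simp)

theorem ModuleCat.intRatShortComplex_shortExact : intRatShortComplex.ShortExact where
  exact := by
    rw [ShortComplex.moduleCat_exact_iff_range_eq_ker]
    exact (Submodule.ker_mkQ _).symm
  mono_f := (ModuleCat.mono_iff_injective _).2 (Int.cast_injective (α := ℚ))
  epi_g := (ModuleCat.epi_iff_surjective _).2 (Submodule.mkQ_surjective _)

theorem groupCohomology.isZero_H2_int_of_commutator_eq_top {G : Type} [Group G] [Finite G]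
    (hG : commutator G = ⊤) : IsZero (groupCohomology (Rep.trivial ℤ G ℤ) 2) := by
  have := Fintype.ofFinite G
  have hQZ : IsZero (groupCohomology
      ((Rep.trivialFunctor ℤ G).obj ModuleCat.intRatShortComplex.X₃) 1) :=
    isZero_H1_of_isTrivial_of_commutator_eq_top _ hG
  have hQ : IsZero (groupCohomology (Rep.trivial ℤ G ℚ) 2) := by
    have hn : (Fintype.card G : ℚ) ≠ 0 := by exact_mod_cast Fintype.card_ne_zero
    refine isZero_H2_of_bijective_nsmul_card _ ?_
    simp only [nsmul_eq_mul]
    exact (Equiv.mulLeft₀ _ hn).bijective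
  exact (mapShortComplex₁_exact
    (ModuleCat.intRatShortComplex_shortExact.map_trivialFunctor (G := G)) (i := 1) rfl
    ).isZero_of_both_isZero hQZ hQ

section Shapiro

variable {G : Type} [Group G] (H : Subgroup G)

theorem ofMulActionFinsupp_apply {k X : Type} [CommSemiring k] [MulAction G X]
    (g : G) (m : X →₀ k) (x : X) : ofMulActionFinsupp k G X g m x = m (g⁻¹ • x) := by
  classical
  exact Finsupp.mapDomain_equiv_apply (f := MulAction.toPerm g) m x

/- The coinduced module consists of functions on `G` constant on the right cosets `Hx`, while
`G ⧸ H` is the set of left cosets `xH`; the two are matched by `x ↦ x⁻¹`. -/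
noncomputable def finsuppQuotientToCoind :
    ((G ⧸ H) →₀ ℤ) →ₗ[ℤ] Representation.coindV H.subtype (Rep.trivial ℤ H ℤ).ρ where
  toFun m := ⟨fun x => m (x⁻¹ : G), fun s x => by
    simp [mul_inv_rev, QuotientGroup.mk_mul_of_mem _ (inv_mem s.2)]⟩
  map_add' _ _ := rfl
  map_smul' _ _ := rfl

theorem finsuppQuotientToCoind_apply (m : (G ⧸ H) →₀ ℤ) (x : G) :
    (finsuppQuotientToCoind H m).1 x = m (x⁻¹ : G) :=
  rfl

theorem finsuppQuotientToCoind_bijective [Finite (G ⧸ H)] :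
    Function.Bijective (finsuppQuotientToCoind H) := by
  refine ⟨fun m m' h => Finsupp.ext fun p => ?_, fun f => ?_⟩
  · induction p using QuotientGroup.induction_on with | H x => ?_
    have := congrFun (congrArg Subtype.val h) x⁻¹
    rwa [finsuppQuotientToCoind_apply, finsuppQuotientToCoind_apply, inv_inv] at this
  · refine ⟨Finsupp.equivFunOnFinite.symm fun p => Quotient.liftOn' p (fun x => f.1 x⁻¹)
      fun x y hxy => ?_, Subtype.ext (funext fun x => ?_)⟩
    · have := f.2 ⟨y⁻¹ * x, by simpa using inv_mem (QuotientGroup.leftRel_apply.1 hxy)⟩ x⁻¹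
      simpa using this.symm
    · rw [finsuppQuotientToCoind_apply]
      simp

noncomputable def ofMulActionFinsuppQuotientIsoCoind [Finite (G ⧸ H)] :
    Rep.of (ofMulActionFinsupp ℤ G (G ⧸ H)) ≅ Rep.coind H.subtype (Rep.trivial ℤ H ℤ) :=
  Rep.mkIso <| .mk (LinearEquiv.ofBijective _ (finsuppQuotientToCoind_bijective H)) fun g =>
    LinearMap.ext fun m => Subtype.ext <| funext fun x => by
      change (finsuppQuotientToCoind H (ofMulActionFinsupp ℤ G (G ⧸ H) g m)).1 x
        = (finsuppQuotientToCoind H m).1 (x * g)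
      rw [finsuppQuotientToCoind_apply, finsuppQuotientToCoind_apply]
      simp [ofMulActionFinsupp_apply, mul_inv_rev]

theorem isZero_H2_ofMulActionFinsupp_of_commutator_eq_top [Finite G] (hH : commutator H = ⊤) :
    IsZero (groupCohomology (Rep.of (ofMulActionFinsupp ℤ G (G ⧸ H))) 2) :=
  (isZero_H2_int_of_commutator_eq_top hH).of_iso
    ((functor ℤ G 2).mapIso (ofMulActionFinsuppQuotientIsoCoind H) ≪≫ coindIso _ 2)

end Shapiro

/-- **The connecting homomorphism `H²(G, J_{G/H}) → H³(G, ℤ)` is injective for a perfect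
subgroup `H`** (step in the proof of Proposition 2.8 of the paper). Let `G` be a finite
group and `H ≤ G` a perfect subgroup. Then the connecting homomorphism of the long exact
cohomology sequence associated to the short exact sequence of `G`-modules
`0 → ℤ → ℤ[G/H] → J_{G/H} → 0` is an injective group homomorphism
`H²(G, J_{G/H}) ↪ H³(G, ℤ)`. -/
theorem connecting_hom_injective (G : Type) [Group G] [Finite G] (H : Subgroup G)
    (hH : commutator ↥H = ⊤) :
    Function.Injective
      ((sesCochainComplexes_shortExact G H).δ 2 3 rfl :
        groupCohomology (chevalley G H) 2 ⟶ groupCohomology (Rep.trivial ℤ G ℤ) 3) :=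
  (ModuleCat.mono_iff_injective _).1 <| (sesCochainComplexes_shortExact G H).mono_δ 2 3 rfl
    (isZero_H2_ofMulActionFinsupp_of_commutator_eq_top H hH)
end

section
/- Let n ≥ 4 and let U be the group with generators z, t_1, …, t_{n−1} and the Schur relations. Then there is a surjective group homomorphism π : U → S_n with π(z) = 1 and π(t_i) = (i, i+1) for each i, whose kernel is K = ⟨z⟩; moreover z is central in U, z² = 1, z ≠ 1, and z ∈ [U,U], so that U is a stem extension of S_n with kernel of order 2 (in particular |U| = 2·n!). -/
/-- The generator type for Schur's presentation of a double cover of `Sₙ`: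
`none` stands for the central element `z`, and `some i` (for `i : Fin (n-1)`) stands
for the generator `t_{i+1}` (which will map to the transposition `(i+1, i+2)` of
`{1, ..., n}`). -/
abbrev SchurGen (n : ℕ) := Option (Fin (n - 1))

/-- The relators of Schur's presentation: `z² = 1`; `z tᵢ = tᵢ z`; `tᵢ² = z`;
`(tᵢ tᵢ₊₁)³ = z`; and `tᵢ tⱼ = z tⱼ tᵢ` for `|i - j| ≥ 2`. -/
def schurRels (n : ℕ) : Set (FreeGroup (SchurGen n)) :=
  let z : FreeGroup (SchurGen n) := FreeGroup.of none
  let t : Fin (n - 1) → FreeGroup (SchurGen n) := fun i => FreeGroup.of (some i)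
  {z ^ 2}
    ∪ {r | ∃ i, r = (z * t i) * (t i * z)⁻¹}
    ∪ {r | ∃ i, r = t i ^ 2 * z⁻¹}
    ∪ {r | ∃ i j : Fin (n - 1), (j : ℕ) = (i : ℕ) + 1 ∧ r = (t i * t j) ^ 3 * z⁻¹}
    ∪ {r | ∃ i j : Fin (n - 1), ((i : ℕ) + 2 ≤ (j : ℕ) ∨ (j : ℕ) + 2 ≤ (i : ℕ)) ∧
        r = (t i * t j) * (z * t j * t i)⁻¹}

/-!
The transpositions `(i, i+1)` satisfy Schur's relations with `z ↦ 1`, which gives `π`; the simple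
roots `eᵢ - eᵢ₊₁` of `ℝⁿ`, viewed in the Clifford algebra of the form `-‖x‖²/2`, satisfy them with
`z ↦ -1`, so `z ≠ 1`. The relation `t₁ t₃ = z t₃ t₁` exhibits `z` as a commutator.

Modulo `⟨z⟩` the `tᵢ` are involutions satisfying the Coxeter relations of type `A_{n-1}`, and such a
group has at most `n!` elements: the subgroup generated by `t₁, …, tₘ` is the union of the `m + 1`
cosets `H · tₘ tₘ₋₁ ⋯ tₘ₋ₖ₊₁` (`0 ≤ k ≤ m`) of the subgroup `H` generated by `t₁, …, tₘ₋₁`.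
So `|U ⧸ ⟨z⟩| ≤ n! = |Sₙ|`, which forces `ker π = ⟨z⟩` and `|U| = 2 · n!`.
-/

section GroupTheory

open Subgroup

variable {G : Type*} [Group G]

theorem braid_of_mul_pow_three_eq_one {a b : G} (ha : a * a = 1) (hb : b * b = 1)
    (h : (a * b) ^ 3 = 1) : a * b * a = b * a * b := by
  have hprod : (a * b * a) * (b * a * b) = 1 := by
    rw [← h]; simp only [pow_succ, pow_zero, one_mul, mul_assoc]
  rw [eq_inv_of_mul_eq_one_left hprod, mul_inv_rev, mul_inv_rev, inv_eq_of_mul_eq_one_right ha,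
    inv_eq_of_mul_eq_one_right hb, ← mul_assoc]

theorem Subgroup.normal_of_le_center {H : Subgroup G} (hH : H ≤ center G) : H.Normal :=
  ⟨fun x hx g => by rwa [mem_center_iff.1 (hH hx) g, mul_inv_cancel_right]⟩

theorem MonoidHom.ker_eq_of_card_quotient_le {Q : Type*} [Group Q] {π : G →* Q}
    (hπ : Function.Surjective π) {N : Subgroup G} [N.Normal] [Finite (G ⧸ N)] (hN : N ≤ π.ker)
    (hcard : Nat.card (G ⧸ N) ≤ Nat.card Q) : π.ker = N :=
  ((QuotientGroup.injective_lift_iff N π hN).1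
    ((QuotientGroup.lift_surjective_of_surjective N π hπ hN).bijective_of_nat_card_le hcard).1).symm

end GroupTheory

section CoxeterA

open Nat Subgroup

variable {G : Type*} [Group G]

def descWord (t : ℕ → G) (m : ℕ) : ℕ → G
  | 0 => 1
  | k + 1 => descWord t m k * t (m - k)

variable {t : ℕ → G} {m : ℕ}

theorem descWord_mem_closure (k : ℕ) : descWord t m k ∈ closure (t '' Set.Iio (m + 1)) := by
  induction k with
  | zero => exact one_mem _
  | succ k ih => exact mul_mem ih (subset_closure ⟨m - k, by simp only [Set.mem_Iio]; omega, rfl⟩)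

theorem commute_descWord (hfar : ∀ i j, i + 2 ≤ j → j ≤ m → Commute (t i) (t j)) {i k : ℕ}
    (h : i + k + 1 ≤ m) : Commute (t i) (descWord t m k) := by
  induction k with
  | zero => exact Commute.one_right _
  | succ k ih => exact (ih (by omega)).mul_right (hfar _ _ (by omega) (by omega))

theorem descWord_mul_eq_mul_descWord
    (hbraid : ∀ i, i + 1 ≤ m → t i * t (i + 1) * t i = t (i + 1) * t i * t (i + 1))
    (hfar : ∀ i j, i + 2 ≤ j → j ≤ m → Commute (t i) (t j)) {k i : ℕ}
    (hk : k ≤ m + 1) (hik : m + 2 ≤ i + k) (hi : i ≤ m) :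
    descWord t m k * t i = t (i - 1) * descWord t m k := by
  induction k with
  | zero => omega
  | succ k ih =>
    by_cases hlast : i + k = m + 1
    · obtain ⟨k, rfl⟩ : ∃ k', k = k' + 1 := ⟨k - 1, by omega⟩
      have hbr : t i * t (i - 1) * t i = t (i - 1) * t i * t (i - 1) := by
        simpa [Nat.sub_add_cancel (show 1 ≤ i by omega)] using (hbraid (i - 1) (by omega)).symm
      have hcomm := commute_descWord hfar (i := i - 1) (k := k) (by omega)
      simp only [descWord, show m - k = i by omega, show m - (k + 1) = i - 1 by omega]
      calc descWord t m k * t i * t (i - 1) * t i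
          = descWord t m k * (t i * t (i - 1) * t i) := by simp only [mul_assoc]
        _ = t (i - 1) * descWord t m k * (t i * t (i - 1)) := by
          rw [hbr]; simp only [← mul_assoc]; rw [← hcomm.eq]
        _ = t (i - 1) * (descWord t m k * t i * t (i - 1)) := by simp only [mul_assoc]
    · have hc : Commute (t (m - k)) (t i) := hfar _ _ (by omega) hi
      simp only [descWord]
      rw [mul_assoc, hc.eq, ← mul_assoc, ih (by omega) (by omega), mul_assoc]

theorem exists_descWord_mul_eq (hsq : ∀ i ≤ m, t i * t i = 1)
    (hbraid : ∀ i, i + 1 ≤ m → t i * t (i + 1) * t i = t (i + 1) * t i * t (i + 1))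
    (hfar : ∀ i j, i + 2 ≤ j → j ≤ m → Commute (t i) (t j)) {k i : ℕ}
    (hk : k ≤ m + 1) (hi : i ≤ m) :
    ∃ k' ≤ m + 1, ∃ h ∈ closure (t '' Set.Iio m), descWord t m k * t i = h * descWord t m k' := by
  have mem {j : ℕ} (hj : j < m) : t j ∈ closure (t '' Set.Iio m) := subset_closure ⟨j, hj, rfl⟩
  -- `t i` commutes past the word, extends it, cancels its last letter, or becomes `t (i - 1)`.
  rcases lt_trichotomy (i + k) m with hlt | heq | hgt
  · exact ⟨k, hk, t i, mem (by omega), (commute_descWord hfar (i := i) (k := k) (by omega)).eq.symm⟩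
  · refine ⟨k + 1, by omega, 1, one_mem _, ?_⟩
    rw [one_mul, descWord, show m - k = i by omega]
  · by_cases hcancel : i + k = m + 1
    · obtain ⟨k, rfl⟩ : ∃ k', k = k' + 1 := ⟨k - 1, by omega⟩
      refine ⟨k, by omega, 1, one_mem _, ?_⟩
      rw [one_mul, descWord, show m - k = i by omega, mul_assoc, hsq i hi, mul_one]
    · exact ⟨k, hk, t (i - 1), mem (by omega),
        descWord_mul_eq_mul_descWord hbraid hfar hk (by omega) hi⟩

theorem exists_mul_descWord_of_mem_closure (hsq : ∀ i ≤ m, t i * t i = 1)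
    (hbraid : ∀ i, i + 1 ≤ m → t i * t (i + 1) * t i = t (i + 1) * t i * t (i + 1))
    (hfar : ∀ i j, i + 2 ≤ j → j ≤ m → Commute (t i) (t j)) {x : G}
    (hx : x ∈ closure (t '' Set.Iio (m + 1))) :
    ∃ k ≤ m + 1, ∃ h ∈ closure (t '' Set.Iio m), x = h * descWord t m k := by
  have step {x : G} {i : ℕ} (hi : i < m + 1)
      (hx : ∃ k ≤ m + 1, ∃ h ∈ closure (t '' Set.Iio m), x = h * descWord t m k) :
      ∃ k ≤ m + 1, ∃ h ∈ closure (t '' Set.Iio m), x * t i = h * descWord t m k := by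
    obtain ⟨k, hk, h, hh, rfl⟩ := hx
    obtain ⟨k', hk', h', hh', heq⟩ := exists_descWord_mul_eq hsq hbraid hfar hk (i := i) (by omega)
    exact ⟨k', hk', h * h', mul_mem hh hh', by rw [mul_assoc, heq, mul_assoc]⟩
  induction hx using closure_induction_right with
  | one => exact ⟨0, by omega, 1, one_mem _, by simp [descWord]⟩
  | mul_right x _ y hy ih =>
    obtain ⟨i, hi, rfl⟩ := hy
    exact step hi ih
  | mul_inv_cancel x _ y hy ih =>
    obtain ⟨i, hi, rfl⟩ := hy
    rw [inv_eq_of_mul_eq_one_right (hsq i (by simpa [Nat.lt_succ_iff] using hi))]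
    exact step hi ih

theorem finite_closure_and_card_le_factorial (hsq : ∀ i < m, t i * t i = 1)
    (hbraid : ∀ i, i + 2 ≤ m → t i * t (i + 1) * t i = t (i + 1) * t i * t (i + 1))
    (hfar : ∀ i j, i + 2 ≤ j → j < m → Commute (t i) (t j)) :
    Finite (closure (t '' Set.Iio m)) ∧ Nat.card (closure (t '' Set.Iio m)) ≤ (m + 1)! := by
  induction m with
  | zero =>
    rw [show t '' Set.Iio 0 = ∅ by simp, Subgroup.closure_empty]
    exact ⟨inferInstance, by simp⟩
  | succ m ih =>
    obtain ⟨hfin, hcard⟩ := ih (fun i hi => hsq i (by omega)) (fun i hi => hbraid i (by omega))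
      (fun i j hij hj => hfar i j hij (by omega))
    let H := closure (t '' Set.Iio m)
    let X := closure (t '' Set.Iio (m + 1))
    have hHX : H ≤ X := closure_mono (Set.image_mono (Set.Iio_subset_Iio (by omega)))
    let f : H × Fin (m + 2) → X := fun p =>
      ⟨p.1 * descWord t m p.2, mul_mem (hHX p.1.2) (descWord_mem_closure _)⟩
    have hf : Function.Surjective f := by
      rintro ⟨x, hx⟩
      obtain ⟨k, hk, h, hh, rfl⟩ := exists_mul_descWord_of_mem_closure
        (fun i hi => hsq i (by omega)) (fun i hi => hbraid i (by omega))
        (fun i j hij hj => hfar i j hij (by omega)) hx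
      exact ⟨(⟨h, hh⟩, ⟨k, by omega⟩), rfl⟩
    refine ⟨Finite.of_surjective f hf, ?_⟩
    calc Nat.card X ≤ Nat.card (H × Fin (m + 2)) := Nat.card_le_card_of_surjective f hf
      _ = Nat.card H * (m + 2) := by simp
      _ ≤ (m + 1)! * (m + 2) := Nat.mul_le_mul_right _ hcard
      _ = (m + 2)! := by rw [Nat.factorial_succ (m + 1)]; ring

theorem finite_and_card_le_factorial_of_coxeterA {m : ℕ} (s : Fin m → G)
    (hgen : closure (Set.range s) = ⊤) (hsq : ∀ i, s i * s i = 1)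
    (hbraid : ∀ i j : Fin m, (j : ℕ) = i + 1 → (s i * s j) ^ 3 = 1)
    (hfar : ∀ i j : Fin m, (i : ℕ) + 2 ≤ j → Commute (s i) (s j)) :
    Finite G ∧ Nat.card G ≤ (m + 1)! := by
  let t : ℕ → G := fun i => if h : i < m then s ⟨i, h⟩ else 1
  have ht (i : Fin m) : t i = s i := dif_pos i.2
  have hrange : t '' Set.Iio m = Set.range s := by
    ext x
    constructor
    · rintro ⟨i, hi, rfl⟩; exact ⟨⟨i, hi⟩, (ht ⟨i, hi⟩).symm⟩
    · rintro ⟨i, rfl⟩; exact ⟨i, i.2, ht i⟩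
  obtain ⟨hfin, hcard⟩ := finite_closure_and_card_le_factorial (t := t) (m := m)
    (fun i hi => by simpa only [← ht ⟨i, hi⟩] using hsq ⟨i, hi⟩)
    (fun i hi => by
      have h := hbraid ⟨i, by omega⟩ ⟨i + 1, hi⟩ rfl
      simpa only [← ht] using braid_of_mul_pow_three_eq_one (hsq _) (hsq _) h)
    (fun i j hij hj => by simpa only [← ht] using hfar ⟨i, by omega⟩ ⟨j, hj⟩ hij)
  rw [hrange, hgen] at hfin hcard
  rw [card_top] at hcard
  exact ⟨Finite.of_equiv _ topEquiv.toEquiv, hcard⟩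

end CoxeterA

structure SchurRelations {G : Type*} [Group G] (n : ℕ) (z : G) (t : Fin (n - 1) → G) :
    Prop where
  sq_z : z ^ 2 = 1
  commute_z : ∀ i, Commute z (t i)
  mul_self : ∀ i, t i * t i = z
  pow_three : ∀ i j : Fin (n - 1), (j : ℕ) = i + 1 → (t i * t j) ^ 3 = z
  anticommute : ∀ i j : Fin (n - 1), (i : ℕ) + 2 ≤ j ∨ (j : ℕ) + 2 ≤ i →
    t i * t j = z * (t j * t i)

section Presentation

variable {G : Type*} [Group G] {n : ℕ}

theorem lift_schurRels_eq_one_iff (z : G) (t : Fin (n - 1) → G) :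
    (∀ r ∈ schurRels n, FreeGroup.lift (fun x => x.elim z t) r = 1) ↔ SchurRelations n z t := by
  constructor
  · intro h
    refine ⟨?_, fun i => ?_, fun i => ?_, fun i j hij => ?_, fun i j hij => ?_⟩
    · simpa only [map_pow, FreeGroup.lift_apply_of, Option.elim_none]
        using h _ (Or.inl (Or.inl (Or.inl (Or.inl rfl))))
    · show z * t i = t i * z
      simpa only [map_mul, map_inv, FreeGroup.lift_apply_of, Option.elim_none, Option.elim_some,
        mul_inv_eq_one] using h _ (Or.inl (Or.inl (Or.inl (Or.inr ⟨i, rfl⟩))))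
    · simpa only [map_mul, map_inv, map_pow, FreeGroup.lift_apply_of, Option.elim_none,
        Option.elim_some, mul_inv_eq_one, pow_two] using h _ (Or.inl (Or.inl (Or.inr ⟨i, rfl⟩)))
    · simpa only [map_mul, map_inv, map_pow, FreeGroup.lift_apply_of, Option.elim_none,
        Option.elim_some, mul_inv_eq_one] using h _ (Or.inl (Or.inr ⟨i, j, hij, rfl⟩))
    · rw [← mul_assoc]
      simpa only [map_mul, map_inv, FreeGroup.lift_apply_of, Option.elim_none, Option.elim_some,
        mul_inv_eq_one] using h _ (Or.inr ⟨i, j, hij, rfl⟩)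
  · rintro h r ((((rfl | ⟨i, rfl⟩) | ⟨i, rfl⟩) | ⟨i, j, hij, rfl⟩) | ⟨i, j, hij, rfl⟩) <;>
      simp only [map_mul, map_inv, map_pow, FreeGroup.lift_apply_of, Option.elim_none,
        Option.elim_some, mul_inv_eq_one]
    · exact h.sq_z
    · exact h.commute_z i
    · exact (pow_two _).trans (h.mul_self i)
    · exact h.pow_three i j hij
    · exact (h.anticommute i j hij).trans (mul_assoc _ _ _).symm

variable {z : G} {t : Fin (n - 1) → G}

noncomputable def SchurRelations.lift (h : SchurRelations n z t) :
    PresentedGroup (schurRels n) →* G :=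
  PresentedGroup.toGroup ((lift_schurRels_eq_one_iff z t).2 h)

@[simp]
theorem SchurRelations.lift_of_none (h : SchurRelations n z t) :
    h.lift (PresentedGroup.of none) = z :=
  PresentedGroup.toGroup.of _

@[simp]
theorem SchurRelations.lift_of_some (h : SchurRelations n z t) (i : Fin (n - 1)) :
    h.lift (PresentedGroup.of (some i)) = t i :=
  PresentedGroup.toGroup.of _

theorem schurRelations_of :
    SchurRelations n (PresentedGroup.of (rels := schurRels n) none)
      (fun i => PresentedGroup.of (some i)) := by
  refine (lift_schurRels_eq_one_iff _ _).1 fun r hr => ?_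
  have hof : (fun x : SchurGen n => x.elim (PresentedGroup.of (rels := schurRels n) none)
      fun i => PresentedGroup.of (some i)) = PresentedGroup.of := by
    funext x; cases x <;> rfl
  have hmk : FreeGroup.lift (PresentedGroup.of (rels := schurRels n)) = PresentedGroup.mk _ :=
    FreeGroup.ext_hom _ _ fun x => by simp [PresentedGroup.of]
  rw [hof, hmk]
  exact PresentedGroup.one_of_mem hr

end Presentation

section AdjacentSwaps

open Equiv

theorem Equiv.swap_mul_swap_pow_three {α : Type*} [DecidableEq α] {a b c : α} (hab : a ≠ b)
    (hbc : b ≠ c) (hac : a ≠ c) : (swap a b * swap b c) ^ 3 = 1 :=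
  calc (swap a b * swap b c) ^ 3
      = (swap b a * swap c b * swap b a) * (swap b c * swap a b * swap b c) := by
        rw [swap_comm b a, swap_comm c b]; simp only [pow_succ, pow_zero, one_mul, mul_assoc]
    _ = swap a c * swap c a := by
        rw [swap_mul_swap_mul_swap hbc.symm hac.symm, swap_mul_swap_mul_swap hab hac]
    _ = 1 := by rw [swap_comm c a, swap_mul_self]

def adjSwap (n : ℕ) (i : Fin (n - 1)) : Perm (Fin n) :=
  swap ⟨i, by omega⟩ ⟨i + 1, by omega⟩

theorem schurRelations_adjSwap {n : ℕ} : SchurRelations n 1 (adjSwap n) where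
  sq_z := one_pow 2
  commute_z := fun _ => Commute.one_left _
  mul_self := fun _ => swap_mul_self _ _
  pow_three := fun i j hij => by
    rw [adjSwap, adjSwap, show (⟨j, _⟩ : Fin n) = ⟨i + 1, by omega⟩ from Fin.ext hij]
    exact swap_mul_swap_pow_three (by simp) (by simp only [ne_eq, Fin.ext_iff]; omega)
      (by simp only [ne_eq, Fin.ext_iff]; omega)
  anticommute := fun i j hij => by
    rw [one_mul]
    exact (Perm.disjoint_swap_swap (by
      simp only [List.nodup_cons, List.mem_cons, List.not_mem_nil, List.nodup_nil, Fin.ext_iff,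
        or_false, not_false_eq_true, and_true]
      omega)).commute.eq

theorem closure_range_adjSwap (n : ℕ) : Subgroup.closure (Set.range (adjSwap n)) = ⊤ := by
  cases n with
  | zero => exact Subsingleton.elim _ _
  | succ m =>
    exact Subgroup.closure_eq_top_of_mclosure_eq_top (Perm.mclosure_swap_castSucc_succ m)

end AdjacentSwaps

noncomputable section Spin

theorem isUnit_of_mul_self_eq_neg_one {A : Type*} [Ring A] {a : A} (h : a * a = -1) :
    IsUnit a :=
  ⟨⟨a, -a, by rw [mul_neg, h, neg_neg], by rw [neg_mul, h, neg_neg]⟩, rfl⟩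

theorem mul_pow_three_eq_neg_one {A : Type*} [Ring A] {a b : A} (ha : a * a = -1)
    (hb : b * b = -1) (hab : a * b + b * a = 1) : (a * b) ^ 3 = -1 := by
  have hsq : a * b * (a * b) = a * b - 1 :=
    calc a * b * (a * b) = a * (b * a) * b := by noncomm_ring
      _ = a * b - a * a * (b * b) := by rw [eq_sub_of_add_eq' hab]; noncomm_ring
      _ = a * b - 1 := by rw [ha, hb]; noncomm_ring
  calc (a * b) ^ 3 = a * b * (a * b) * (a * b) := by noncomm_ring
    _ = -1 := by rw [hsq, sub_mul, hsq, one_mul]; abel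

variable {n : ℕ}

variable (n) in
def negHalfNormSq : QuadraticForm ℝ (EuclideanSpace ℝ (Fin n)) :=
  LinearMap.BilinMap.toQuadraticMap ((-(1 / 2) : ℝ) • innerₗ (EuclideanSpace ℝ (Fin n)))

theorem polar_negHalfNormSq (x y : EuclideanSpace ℝ (Fin n)) :
    QuadraticMap.polar (negHalfNormSq n) x y = -inner ℝ x y := by
  rw [negHalfNormSq, LinearMap.BilinMap.polar_toQuadraticMap]
  simp only [LinearMap.smul_apply, innerₗ_apply_apply, smul_eq_mul, real_inner_comm x y]
  ring

variable (n) in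
def simpleRoot (i : Fin (n - 1)) : EuclideanSpace ℝ (Fin n) :=
  EuclideanSpace.single ⟨i, by omega⟩ 1 - EuclideanSpace.single ⟨i + 1, by omega⟩ 1

theorem inner_simpleRoot (i j : Fin (n - 1)) :
    inner ℝ (simpleRoot n i) (simpleRoot n j) =
      if i = j then 2 else if (j : ℕ) = i + 1 ∨ (i : ℕ) = j + 1 then -1 else 0 := by
  simp only [simpleRoot, inner_sub_left, inner_sub_right, EuclideanSpace.inner_single_left,
    PiLp.single_apply, Fin.ext_iff]
  split_ifs <;> first | omega | norm_num

theorem negHalfNormSq_simpleRoot (i : Fin (n - 1)) : negHalfNormSq n (simpleRoot n i) = -1 := by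
  have h := QuadraticMap.polar_self (negHalfNormSq n) (simpleRoot n i)
  rw [polar_negHalfNormSq, inner_simpleRoot, if_pos rfl, nsmul_eq_mul, Nat.cast_ofNat] at h
  linarith

open CliffordAlgebra

theorem ι_simpleRoot_mul_self (i : Fin (n - 1)) :
    ι (negHalfNormSq n) (simpleRoot n i) * ι _ (simpleRoot n i) = -1 := by
  rw [ι_sq_scalar, negHalfNormSq_simpleRoot, map_neg, map_one]

theorem ι_mul_ι_add_swap_simpleRoot (i j : Fin (n - 1)) :
    ι (negHalfNormSq n) (simpleRoot n i) * ι _ (simpleRoot n j)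
      + ι _ (simpleRoot n j) * ι _ (simpleRoot n i) =
      if i = j then -2 else if (j : ℕ) = i + 1 ∨ (i : ℕ) = j + 1 then 1 else 0 := by
  rw [ι_mul_ι_add_swap, polar_negHalfNormSq, inner_simpleRoot]
  split_ifs <;> simp [map_ofNat]

variable (n) in
def spinGen (i : Fin (n - 1)) : (CliffordAlgebra (negHalfNormSq n))ˣ :=
  (isUnit_of_mul_self_eq_neg_one (ι_simpleRoot_mul_self i)).unit

theorem val_spinGen (i : Fin (n - 1)) :
    (spinGen n i : CliffordAlgebra (negHalfNormSq n)) = ι _ (simpleRoot n i) :=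
  IsUnit.unit_spec _

theorem schurRelations_spinGen : SchurRelations n (-1) (spinGen n) where
  sq_z := neg_one_sq
  commute_z := fun _ => Commute.neg_one_left _
  mul_self := fun i => Units.ext <| by
    rw [Units.val_mul, val_spinGen, ι_simpleRoot_mul_self, Units.val_neg, Units.val_one]
  pow_three := fun i j hij => Units.ext <| by
    have hab := ι_mul_ι_add_swap_simpleRoot i j
    rw [if_neg (by simp only [Fin.ext_iff]; omega), if_pos (Or.inl hij)] at hab
    simpa [val_spinGen] using
      mul_pow_three_eq_neg_one (ι_simpleRoot_mul_self i) (ι_simpleRoot_mul_self j) hab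
  anticommute := fun i j hij => Units.ext <| by
    have hab := ι_mul_ι_add_swap_simpleRoot i j
    rw [if_neg (by simp only [Fin.ext_iff]; omega), if_neg (by omega)] at hab
    simpa [val_spinGen] using eq_neg_of_add_eq_zero_left hab

theorem neg_one_ne_one_units_cliffordAlgebra :
    (-1 : (CliffordAlgebra (negHalfNormSq n))ˣ) ≠ 1 := by
  intro h
  have h' : algebraMap ℝ (CliffordAlgebra (negHalfNormSq n)) (-1) = algebraMap ℝ _ 1 := by
    simpa using congrArg Units.val h
  exact absurd ((algebraMap ℝ _).injective h') (by norm_num)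

end Spin

namespace SchurCover

open Nat Subgroup
open scoped commutatorElement

variable {n : ℕ}

theorem of_none_mem_center :
    PresentedGroup.of (rels := schurRels n) none ∈ center (PresentedGroup (schurRels n)) := by
  rw [mem_center_iff]
  intro g
  have hg : g ∈ centralizer {PresentedGroup.of (rels := schurRels n) none} := by
    refine PresentedGroup.generated_by _ _ (fun x => ?_) g
    rw [mem_centralizer_singleton_iff]
    cases x with
    | none => rfl
    | some i => exact (schurRelations_of.commute_z i).eq.symm
  exact mem_centralizer_singleton_iff.1 hg

theorem of_none_ne_one : PresentedGroup.of (rels := schurRels n) none ≠ 1 := fun h =>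
  neg_one_ne_one_units_cliffordAlgebra (by simpa using congrArg schurRelations_spinGen.lift h)

theorem orderOf_of_none : orderOf (PresentedGroup.of (rels := schurRels n) none) = 2 :=
  have : Fact (Nat.Prime 2) := ⟨Nat.prime_two⟩
  orderOf_eq_prime schurRelations_of.sq_z of_none_ne_one

theorem of_none_mem_commutator (hn : 4 ≤ n) :
    PresentedGroup.of (rels := schurRels n) none ∈ commutator (PresentedGroup (schurRels n)) := by
  let t (k : ℕ) (hk : k < n - 1) := PresentedGroup.of (rels := schurRels n) (some ⟨k, hk⟩)
  have h02 : t 0 (by omega) * t 2 (by omega) = _ * (t 2 (by omega) * t 0 (by omega)) :=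
    schurRelations_of.anticommute _ _ (Or.inl (by simp))
  have hz : PresentedGroup.of none = ⁅t 0 (by omega), t 2 (by omega)⁆ := by
    rw [commutatorElement_def, mul_assoc, ← mul_inv_rev, h02, mul_inv_cancel_right]
  rw [hz, commutator_def]
  exact commutator_mem_commutator (mem_top _) (mem_top _)

instance : (zpowers (PresentedGroup.of (rels := schurRels n) none)).Normal :=
  normal_of_le_center (zpowers_le.2 of_none_mem_center)

theorem finite_and_card_quotient_le_factorial :
    Finite (PresentedGroup (schurRels n) ⧸ zpowers (PresentedGroup.of none)) ∧
      Nat.card (PresentedGroup (schurRels n) ⧸ zpowers (PresentedGroup.of none)) ≤ n ! := by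
  let mk := QuotientGroup.mk' (zpowers (PresentedGroup.of (rels := schurRels n) none))
  have hz : mk (PresentedGroup.of none) = 1 := (QuotientGroup.eq_one_iff _).2 (mem_zpowers _)
  let s (i : Fin (n - 1)) := mk (PresentedGroup.of (some i))
  have hgen : closure (Set.range s) = ⊤ := by
    refine eq_top_iff.2 fun g _ => ?_
    obtain ⟨u, rfl⟩ := QuotientGroup.mk'_surjective _ g
    refine PresentedGroup.generated_by _ ((closure (Set.range s)).comap mk) (fun x => ?_) u
    cases x with
    | none => exact (mem_comap.2 (hz ▸ one_mem _))
    | some i => exact subset_closure ⟨i, rfl⟩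
  have h := finite_and_card_le_factorial_of_coxeterA s hgen
    (fun i => by rw [← map_mul, schurRelations_of.mul_self, hz])
    (fun i j hij => by rw [← map_mul, ← map_pow, schurRelations_of.pow_three i j hij, hz])
    (fun i j hij => by
      rw [Commute, SemiconjBy, ← map_mul, schurRelations_of.anticommute i j (Or.inl hij), map_mul,
        hz, one_mul, map_mul])
  have hfact : (n - 1 + 1)! = n ! := by cases n <;> rfl
  rwa [hfact] at h

theorem lift_adjSwap_surjective : Function.Surjective (schurRelations_adjSwap (n := n)).lift := by
  rw [← MonoidHom.range_eq_top, eq_top_iff, ← closure_range_adjSwap, closure_le]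
  rintro _ ⟨i, rfl⟩
  exact ⟨PresentedGroup.of (some i), SchurRelations.lift_of_some _ i⟩

end SchurCover

/-- **Schur's presentation of the double cover of `Sₙ` is a stem extension** (Proposition 2.4).
For `n ≥ 4`, the group `U` presented by generators `z, t₁, ..., t_{n-1}` and Schur's relations
admits a surjection `π : U → Sₙ` with `π(z) = 1`, `π(tᵢ) = (i, i+1)`, and kernel `⟨z⟩`;
moreover `z` is central, `z² = 1`, `z ≠ 1` and `z ∈ [U, U]`, so `U` is a stem extension of `Sₙ`
with kernel of order `2`; in particular `|U| = 2·n!`. -/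
theorem schur_cover_of_symmetricGroup (n : ℕ) (hn : 4 ≤ n) :
    ∃ π : PresentedGroup (schurRels n) →* Equiv.Perm (Fin n),
      Function.Surjective π ∧
      π (PresentedGroup.of none) = 1 ∧
      (∀ i : Fin (n - 1),
        π (PresentedGroup.of (some i)) =
          Equiv.swap ⟨i.1, by have := i.2; omega⟩ ⟨i.1 + 1, by have := i.2; omega⟩) ∧
      π.ker = Subgroup.zpowers (PresentedGroup.of none) ∧
      (PresentedGroup.of (rels := schurRels n) none) ∈
        Subgroup.center (PresentedGroup (schurRels n)) ∧
      (PresentedGroup.of (rels := schurRels n) none) ^ 2 = 1 ∧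
      (PresentedGroup.of (rels := schurRels n) none) ≠ 1 ∧
      (PresentedGroup.of (rels := schurRels n) none) ∈
        commutator (PresentedGroup (schurRels n)) ∧
      Nat.card (PresentedGroup (schurRels n)) = 2 * n.factorial := by
  let π := (schurRelations_adjSwap (n := n)).lift
  have hsurj : Function.Surjective π := SchurCover.lift_adjSwap_surjective
  obtain ⟨_, hcard⟩ := SchurCover.finite_and_card_quotient_le_factorial (n := n)
  have hker : π.ker = Subgroup.zpowers (PresentedGroup.of none) :=
    MonoidHom.ker_eq_of_card_quotient_le hsurj (Subgroup.zpowers_le.2 (SchurRelations.lift_of_none _))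
      (by rwa [Nat.card_perm, Nat.card_fin])
  refine ⟨π, hsurj, SchurRelations.lift_of_none _, SchurRelations.lift_of_some _, hker,
    SchurCover.of_none_mem_center, schurRelations_of.sq_z, SchurCover.of_none_ne_one,
    SchurCover.of_none_mem_commutator hn, ?_⟩
  rw [π.ker.card_eq_card_quotient_mul_card_subgroup,
    Nat.card_congr (QuotientGroup.quotientKerEquivOfSurjective π hsurj).toEquiv, hker,
    Nat.card_zpowers, SchurCover.orderOf_of_none, Nat.card_perm, Nat.card_fin, mul_comm]
end

section
/- Let n ≥ 4 and let U be the group with generators z, t_1, …, t_{n−1} and the Schur relations. Setting e_i = t_1 t_{i+1} for 1 ≤ i ≤ n−2, the identity z = [e_1^{−1} e_2 e_1, e_2] holds in U. -/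
/-!
Conjugation by `e₁ = t₁t₂` together with `t₂⁻¹ = z⁻¹t₂` gives `e₁⁻¹e₂e₁ = z⁻¹ · t₂t₃t₁t₂`, and since
`z` is central the claim becomes the anticommutation `(t₂t₃t₁t₂)(t₁t₃) = z (t₁t₃)(t₂t₃t₁t₂)`.
This is a short rewriting in the braid relations `t₁t₂t₁ = t₂t₁t₂`, `t₂t₃t₂ = t₃t₂t₃` (which follow
from `(tᵢtᵢ₊₁)³ = z`, `tᵢ² = z` and `z² = 1`) and the relation `t₁t₃ = z t₃t₁`, the latter used
once more forwards than backwards.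
-/

open scoped commutatorElement

section Group

variable {G : Type*} [Group G]

theorem commutatorElement_eq_of_mul_eq {a b c : G} (h : a * b = c * (b * a)) : ⁅a, b⁆ = c := by
  rw [commutatorElement_def, h]
  group

theorem commutatorElement_mul_left_of_mem_center {c : G} (hc : c ∈ Subgroup.center G) (a b : G) :
    ⁅c * a, b⁆ = ⁅a, b⁆ := by
  have hcb : ⁅c, b⁆ = 1 :=
    commutatorElement_eq_one_iff_mul_comm.2 (Subgroup.mem_center_iff.1 hc b).symm
  rw [commutatorElement_mul_left_eq_conj_mul, hcb, mul_one, ← Subgroup.mem_center_iff.1 hc,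
    mul_inv_cancel_right]

theorem braid_of_mul_pow_three {z a b : G} (hz : z * z = 1) (ha : a * a = z) (hb : b * b = z)
    (hab : (a * b) ^ 3 = z) : a * b * a = b * a * b := by
  have hza : Commute z a := ha ▸ (Commute.refl a).mul_left (Commute.refl a)
  have h₁ : a * b * a * (b * a * b) = z := by rw [← hab, pow_three]; group
  have h₂ : b * a * b * (b * a * b) = z :=
    calc b * a * b * (b * a * b) = b * (a * (b * b) * a) * b := by group
      _ = z := by rw [hb, ← hza.eq, mul_assoc z, ha, hz, mul_one, hb]
  exact mul_right_cancel (h₁.trans h₂.symm)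

theorem commutatorElement_conj_eq_of_braid {z u v w : G} (hz : z ∈ Subgroup.center G)
    (hv : v * v = z) (huv : u * v * u = v * u * v) (hvw : v * w * v = w * v * w)
    (huw : u * w = z * (w * u)) :
    ⁅(u * v)⁻¹ * (u * w) * (u * v), u * w⁆ = z := by
  have hz_left_comm : ∀ a b : G, a * (z * b) = z * (a * b) := fun a b => by
    rw [← mul_assoc, Subgroup.mem_center_iff.1 hz, mul_assoc]
  have hv_inv : v⁻¹ = z⁻¹ * v :=
    inv_eq_of_mul_eq_one_left (by rw [mul_assoc, hv, inv_mul_cancel])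
  have hconj : (u * v)⁻¹ * (u * w) * (u * v) = z⁻¹ * (v * w * u * v) := by
    rw [mul_inv_rev, hv_inv]; group
  rw [hconj, commutatorElement_mul_left_of_mem_center (inv_mem hz)]
  apply commutatorElement_eq_of_mul_eq
  calc v * w * u * v * (u * w) = v * (u * w) * v * (w * u) := by
        rw [huw]; simp only [mul_assoc, hz_left_comm]
    _ = v * u * (v * w * v) * u := by rw [hvw]; simp only [mul_assoc]
    _ = u * v * u * w * v * u := by rw [huv]; simp only [mul_assoc]
    _ = z * (u * v * w * (u * v * u)) := by
        rw [mul_assoc (u * v) u w, huw]; simp only [mul_assoc, hz_left_comm]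
    _ = z * (u * (v * w * v) * u * v) := by rw [huv]; simp only [mul_assoc]
    _ = z * (u * w * (v * w * u * v)) := by rw [hvw]; simp only [mul_assoc]

end Group

namespace SchurCover

variable {n : ℕ}

abbrev z : PresentedGroup (schurRels n) := PresentedGroup.of none

abbrev t (i : Fin (n - 1)) : PresentedGroup (schurRels n) := PresentedGroup.of (some i)

theorem z_mul_self : (z : PresentedGroup (schurRels n)) * z = 1 := by
  have h := PresentedGroup.one_of_mem (rels := schurRels n)
    (Or.inl <| Or.inl <| Or.inl <| Or.inl rfl)
  rw [map_pow, pow_two] at h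
  exact h

theorem commute_z_t (i : Fin (n - 1)) : Commute z (t i) := by
  have h := PresentedGroup.mk_eq_mk_of_mul_inv_mem (rels := schurRels n)
    (Or.inl <| Or.inl <| Or.inl <| Or.inr ⟨i, rfl⟩)
  simp only [map_mul] at h
  exact h

theorem z_mem_center : (z : PresentedGroup (schurRels n)) ∈ Subgroup.center _ := by
  refine Subgroup.mem_center_iff.2 fun g => Subgroup.mem_centralizer_singleton_iff.1 <|
    PresentedGroup.generated_by _ _ (fun j => Subgroup.mem_centralizer_singleton_iff.2 ?_) g
  cases j with
  | none => rfl
  | some i => exact (commute_z_t i).eq.symm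

theorem t_mul_self (i : Fin (n - 1)) : t i * t i = z := by
  have h := PresentedGroup.mk_eq_mk_of_mul_inv_mem (rels := schurRels n)
    (Or.inl <| Or.inl <| Or.inr ⟨i, rfl⟩)
  rw [map_pow, pow_two] at h
  exact h

theorem t_braid (i j : Fin (n - 1)) (hij : (j : ℕ) = i + 1) :
    t i * t j * t i = t j * t i * t j := by
  have h := PresentedGroup.mk_eq_mk_of_mul_inv_mem (rels := schurRels n)
    (Or.inl <| Or.inr ⟨i, j, hij, rfl⟩)
  simp only [map_pow, map_mul] at h
  exact braid_of_mul_pow_three z_mul_self (t_mul_self i) (t_mul_self j) h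

theorem t_mul_t_of_add_two_le (i j : Fin (n - 1)) (hij : (i : ℕ) + 2 ≤ j) :
    t i * t j = z * (t j * t i) := by
  have h := PresentedGroup.mk_eq_mk_of_mul_inv_mem (rels := schurRels n)
    (Or.inr ⟨i, j, Or.inl hij, rfl⟩)
  simp only [map_mul, mul_assoc] at h
  exact h

end SchurCover

/-- **The key commutator identity in the Schur cover** (claim in Lemma 2.5).
For `n ≥ 4`, in the group `U` presented by generators `z, t₁, ..., t_{n-1}` and Schur's
relations, setting `eᵢ = t₁ t_{i+1}` for `1 ≤ i ≤ n-2` (below `e ⟨a, _⟩` is `e_{a+1}`),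
we have `z = [e₁⁻¹ e₂ e₁, e₂]`, where `[a, b] = a b a⁻¹ b⁻¹`. -/
theorem schur_central_elt_eq_commutator (n : ℕ) (hn : 4 ≤ n) :
    let U := PresentedGroup (schurRels n)
    let z : U := PresentedGroup.of none
    let e : Fin (n - 2) → U := fun a =>
      PresentedGroup.of (some ⟨0, by have := a.2; omega⟩) *
        PresentedGroup.of (some ⟨a.1 + 1, by have := a.2; omega⟩)
    z = @Bracket.bracket U U commutatorElement ((e ⟨0, by omega⟩)⁻¹ * e ⟨1, by omega⟩ * e ⟨0, by omega⟩) (e ⟨1, by omega⟩) := by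
  intro U z e
  exact (commutatorElement_conj_eq_of_braid SchurCover.z_mem_center (SchurCover.t_mul_self _)
    (SchurCover.t_braid ⟨0, by omega⟩ ⟨1, by omega⟩ rfl)
    (SchurCover.t_braid ⟨1, by omega⟩ ⟨2, by omega⟩ rfl)
    (SchurCover.t_mul_t_of_add_two_le ⟨0, by omega⟩ ⟨2, by omega⟩ le_rfl)).symm
end
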